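/- arXiv:1310.7954 — 7 statements merged into one kernel-verified Lean document; each statement's English description precedes it below -/
import Mathlib

section
/- For every integer n ≥ 1, every α ∈ (0,1], and every θ with θ₁ ≤ θ ≤ θ₂ (where θ₁ = arctan(√(1/α² − 1)·(2^{1/n} − 1)) and θ₂ = arctan(√(1/α² − 1)/(2^{1/n} − 1))), there exists a positive semidefinite matrix X indexed by (Fin n → Fin 2) × (Fin n → Fin 2) whose partial trace over the first factor equals the identity (for all x, x': Σ_y X((y,x),(y,x')) = if x = x' then 1 else 0) and such that trace(Q₀^{⊗n} · X) = 0; that is, Bob achieves perfect hedging, winning at least 1 out of n parallel repetitions with certainty. -/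
open scoped BigOperators ComplexOrder

/-- The losing measurement vector `ψ₀¹ = α sin θ |00⟩ − √(1−α²) cos θ |11⟩`. -/
noncomputable def psi1 (α θ : ℝ) : Fin 2 × Fin 2 → ℂ := fun p =>
  if p = (0, 0) then ((α * Real.sin θ : ℝ) : ℂ)
  else if p = (1, 1) then (-(Real.sqrt (1 - α ^ 2) * Real.cos θ) : ℝ)
  else 0

/-- The losing measurement vector `ψ₀² = α sin θ |01⟩ + √(1−α²) cos θ |10⟩`. -/
noncomputable def psi2 (α θ : ℝ) : Fin 2 × Fin 2 → ℂ := fun p =>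
  if p = (0, 1) then ((α * Real.sin θ : ℝ) : ℂ)
  else if p = (1, 0) then ((Real.sqrt (1 - α ^ 2) * Real.cos θ : ℝ) : ℂ)
  else 0

/-- The losing measurement vector `ψ₀³ = α cos θ |01⟩ − √(1−α²) sin θ |10⟩`. -/
noncomputable def psi3 (α θ : ℝ) : Fin 2 × Fin 2 → ℂ := fun p =>
  if p = (0, 1) then ((α * Real.cos θ : ℝ) : ℂ)
  else if p = (1, 0) then (-(Real.sqrt (1 - α ^ 2) * Real.sin θ) : ℝ)
  else 0

/-- Alice's effective losing operator `Q₀ = ψ₀¹(ψ₀¹)* + ψ₀²(ψ₀²)* + ψ₀³(ψ₀³)*` for one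
repetition of the game. -/
noncomputable def Q0 (α θ : ℝ) : Matrix (Fin 2 × Fin 2) (Fin 2 × Fin 2) ℂ :=
  Matrix.of fun i j =>
    psi1 α θ i * (starRingEnd ℂ) (psi1 α θ j) +
    psi2 α θ i * (starRingEnd ℂ) (psi2 α θ j) +
    psi3 α θ i * (starRingEnd ℂ) (psi3 α θ j)

/-- The `n`-fold Kronecker power `Q₀^{⊗n}`, indexed by `(Fin n → Fin 2) × (Fin n → Fin 2)`. -/
noncomputable def Q0pow (n : ℕ) (α θ : ℝ) :
    Matrix ((Fin n → Fin 2) × (Fin n → Fin 2)) ((Fin n → Fin 2) × (Fin n → Fin 2)) ℂ :=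
  Matrix.of fun p q => ∏ i, Q0 α θ (p.1 i, p.2 i) (q.1 i, q.2 i)

/-!
Bob applies a diagonal unitary `U = diag(μ_x)` with `|μ_x| = 1`; its Choi matrix is `v v*` with
`v = ∑ₓ μ_x |x⟩|x⟩`. On the entries `((x, x), (x', x'))` only `ψ₀¹` contributes to `Q₀`, so there
`Q₀^{⊗n}` is the rank-one matrix `D D*` with `D x = ∏ᵢ ψ₀¹(xᵢ, xᵢ) = a^{n-|x|} (-b)^{|x|}`, where
`a = α sin θ` and `b = √(1-α²) cos θ`; hence Bob's losing probability is `|∑ₓ μ_x conj (D x)|²`.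
Choosing phases making this sum vanish means closing a polygon with side lengths `|D x|`, which is
possible when the longest side `max(a, b)^n` is at most half of the perimeter `(a + b)^n`; the
bounds `θ₁ ≤ θ ≤ θ₂` say exactly `(2^{1/n} - 1) max(a, b) ≤ min(a, b)`.
-/

open Real

theorem Complex.exists_norm_eq_one_mul_add_eq_zero {c s : ℂ} (h : ‖s‖ = ‖c‖) :
    ∃ μ : ℂ, ‖μ‖ = 1 ∧ μ * c + s = 0 := by
  rcases eq_or_ne c 0 with rfl | hc
  · exact ⟨1, norm_one, by simpa using h⟩
  · refine ⟨-s / c, ?_, ?_⟩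
    · rw [norm_div, norm_neg, h, div_self (norm_ne_zero_iff.2 hc)]
    · field_simp
      ring

theorem Complex.exp_neg_arg_mul_I_mul_self (z : ℂ) :
    Complex.exp (-(z.arg * Complex.I)) * z = ‖z‖ := by
  nth_rw 2 [← Complex.norm_mul_exp_arg_mul_I z]
  rw [mul_left_comm, ← Complex.exp_add, neg_add_cancel, Complex.exp_zero, mul_one]

/-- As `z` runs over the upper half circle from `1` to `-1`, the norm below moves
continuously from `(p + q)^n - q^n ≥ q^n` to `q^n - (q - p)^n ≤ q^n`. -/
theorem exists_norm_eq_one_norm_add_mul_pow_sub_pow_eq {p q : ℝ} {n : ℕ} (hp : 0 ≤ p)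
    (hpq : p ≤ q) (h : 2 * q ^ n ≤ (p + q) ^ n) :
    ∃ z : ℂ, ‖z‖ = 1 ∧ ‖((p : ℂ) + q * z) ^ n - (q * z) ^ n‖ = q ^ n := by
  set f : ℝ → ℝ := fun φ =>
    ‖((p : ℂ) + q * Complex.exp (φ * Complex.I)) ^ n - (q * Complex.exp (φ * Complex.I)) ^ n‖
  have hf : Continuous f := by fun_prop
  have hf0 : f 0 = (p + q) ^ n - q ^ n := by
    have : ((p : ℂ) + q * 1) ^ n - (q * 1) ^ n = ((p + q) ^ n - q ^ n : ℝ) := by push_cast; ring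
    simp only [f, Complex.ofReal_zero, zero_mul, Complex.exp_zero, this, Complex.norm_real,
      Real.norm_eq_abs]
    exact abs_of_nonneg (by linarith [pow_nonneg (hp.trans hpq) n])
  have hfπ : f π = q ^ n - (q - p) ^ n := by
    have : ((p : ℂ) + q * -1) ^ n - (q * -1) ^ n = ((-1) ^ n * ((q - p) ^ n - q ^ n) : ℝ) := by
      rw [show (p : ℂ) + q * -1 = -1 * (q - p) by ring, mul_comm (q : ℂ), mul_pow, mul_pow]
      push_cast; ring
    simp only [f, Complex.exp_pi_mul_I, this, Complex.norm_real, Real.norm_eq_abs, abs_mul,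
      abs_pow, abs_neg, abs_one, one_pow, one_mul]
    have hle : (q - p) ^ n ≤ q ^ n := pow_le_pow_left₀ (sub_nonneg.2 hpq) (by linarith) n
    rw [abs_of_nonpos (by linarith)]
    ring
  obtain ⟨φ, -, hφ⟩ : ∃ φ ∈ Set.Icc 0 π, f φ = q ^ n :=
    intermediate_value_Icc' pi_pos.le hf.continuousOn
      ⟨by rw [hfπ]; linarith [pow_nonneg (sub_nonneg.2 hpq) n], by rw [hf0]; linarith⟩
  exact ⟨_, Complex.norm_exp_ofReal_mul_I φ, hφ⟩

/-- The phase of the word `x` is `z^(number of letters j in x)`, except for the constant word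
`x₀ = j`, whose phase closes the polygon: the other terms add up to `(p + q z)^n - (q z)^n`
by the multinomial expansion, which has the length `q^n` of the term at `x₀`. -/
theorem exists_norm_eq_one_sum_mul_prod_ofReal_eq_zero {κ : Type*} [Fintype κ] {n : ℕ}
    {r : κ → ℝ} (hr : ∀ i, 0 ≤ r i) (j : κ) (hj : ∑ i, r i ≤ 2 * r j)
    (h : 2 * r j ^ n ≤ (∑ i, r i) ^ n) :
    ∃ μ : (Fin n → κ) → ℂ, (∀ x, ‖μ x‖ = 1) ∧ ∑ x, μ x * ∏ i, (r (x i) : ℂ) = 0 := by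
  classical
  have hrj : r j ≤ ∑ i, r i := Finset.single_le_sum (fun i _ => hr i) (Finset.mem_univ j)
  obtain ⟨z, hz, hzF⟩ := exists_norm_eq_one_norm_add_mul_pow_sub_pow_eq (q := r j)
    (sub_nonneg.2 hrj) (by linarith) (by rwa [sub_add_cancel])
  let phase : κ → ℂ := fun i => if i = j then z else 1
  have hphase : ∀ i, ‖phase i‖ = 1 := fun i => by by_cases hi : i = j <;> simp [phase, hi, hz]
  have hsum : ∑ i, phase i * r i = (∑ i, r i - r j : ℝ) + r j * z := by
    have : ∀ i, phase i * r i = r i + if i = j then (z - 1) * r j else 0 := fun i => by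
      by_cases hi : i = j <;> simp [phase, hi]; ring
    simp only [this, Finset.sum_add_distrib, Finset.sum_ite_eq', Finset.mem_univ, if_true]
    push_cast; ring
  let x₀ : Fin n → κ := fun _ => j
  have hF : ∑ x ∈ {x₀}ᶜ, ∏ i, phase (x i) * r (x i) =
      ((∑ i, r i - r j : ℝ) + r j * z) ^ n - (r j * z) ^ n := by
    rw [← hsum, Fintype.sum_pow, Fintype.sum_eq_add_sum_compl x₀]
    simp [x₀, phase, Finset.prod_const, mul_comm]
  obtain ⟨μ₀, hμ₀, hμ₀F⟩ := Complex.exists_norm_eq_one_mul_add_eq_zero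
    (c := ∏ i, (r (x₀ i) : ℂ)) (s := ∑ x ∈ {x₀}ᶜ, ∏ i, phase (x i) * r (x i))
    (by rw [hF, hzF]; simp [x₀, abs_of_nonneg (hr j)])
  refine ⟨fun x => if x = x₀ then μ₀ else ∏ i, phase (x i), fun x => ?_, ?_⟩
  · by_cases hx : x = x₀
    · simpa [hx] using hμ₀
    · simp [hx, norm_prod, hphase]
  · rw [Fintype.sum_eq_add_sum_compl x₀, ← hμ₀F]
    dsimp only
    rw [if_pos rfl]
    congr 1
    refine Finset.sum_congr rfl fun x hx => ?_
    rw [if_neg (Finset.mem_compl.1 hx ∘ Finset.mem_singleton.2), ← Finset.prod_mul_distrib]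

theorem exists_norm_eq_one_sum_mul_prod_eq_zero {κ : Type*} [Fintype κ] {n : ℕ}
    (w : κ → ℂ) (j : κ) (hj : ∑ i, ‖w i‖ ≤ 2 * ‖w j‖)
    (h : 2 * ‖w j‖ ^ n ≤ (∑ i, ‖w i‖) ^ n) :
    ∃ μ : (Fin n → κ) → ℂ, (∀ x, ‖μ x‖ = 1) ∧ ∑ x, μ x * ∏ i, w (x i) = 0 := by
  obtain ⟨ν, hν, hνsum⟩ :=
    exists_norm_eq_one_sum_mul_prod_ofReal_eq_zero (fun i => norm_nonneg (w i)) j hj h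
  let u : κ → ℂ := fun i => Complex.exp (-((w i).arg * Complex.I))
  refine ⟨fun x => ν x * ∏ i, u (x i), fun x => ?_, ?_⟩
  · simp [u, norm_prod, hν, Complex.norm_exp]
  · simp_rw [mul_assoc, ← Finset.prod_mul_distrib, u, Complex.exp_neg_arg_mul_I_mul_self]
    exact hνsum

theorem two_mul_pow_le_add_pow {x y : ℝ} {n : ℕ} (hn : n ≠ 0) (hx : 0 ≤ x)
    (h : ((2 : ℝ) ^ ((1 : ℝ) / n) - 1) * x ≤ y) : 2 * x ^ n ≤ (x + y) ^ n := by
  calc 2 * x ^ n = (x * (2 : ℝ) ^ ((1 : ℝ) / n)) ^ n := by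
        rw [mul_pow, one_div, rpow_inv_natCast_pow zero_le_two hn, mul_comm]
    _ ≤ (x + y) ^ n := pow_le_pow_left₀ (by positivity) (by linarith) n

theorem exists_norm_eq_one_sum_mul_prod_fin_two_eq_zero {n : ℕ} (hn : n ≠ 0) (w : Fin 2 → ℂ)
    (h₀ : ((2 : ℝ) ^ ((1 : ℝ) / n) - 1) * ‖w 0‖ ≤ ‖w 1‖)
    (h₁ : ((2 : ℝ) ^ ((1 : ℝ) / n) - 1) * ‖w 1‖ ≤ ‖w 0‖) :
    ∃ μ : (Fin n → Fin 2) → ℂ, (∀ x, ‖μ x‖ = 1) ∧ ∑ x, μ x * ∏ i, w (x i) = 0 := by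
  rcases le_total ‖w 0‖ ‖w 1‖ with hw | hw
  · refine exists_norm_eq_one_sum_mul_prod_eq_zero w 1 ?_ ?_ <;> rw [Fin.sum_univ_two]
    · linarith
    · rw [add_comm]; exact two_mul_pow_le_add_pow hn (norm_nonneg _) h₁
  · refine exists_norm_eq_one_sum_mul_prod_eq_zero w 0 ?_ ?_ <;> rw [Fin.sum_univ_two]
    · linarith
    · exact two_mul_pow_le_add_pow hn (norm_nonneg _) h₀

theorem Real.mul_cos_le_sin_of_arctan_le {x θ : ℝ} (h : arctan x ≤ θ) (hθ : θ < π / 2) :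
    x * cos θ ≤ sin θ := by
  have hθ' : -(π / 2) < θ := (neg_pi_div_two_lt_arctan x).trans_le h
  have hcos : 0 < cos θ := cos_pos_of_mem_Ioo ⟨hθ', hθ⟩
  rw [← arctan_tan hθ' hθ, arctan_le_arctan_iff, tan_eq_sin_div_cos] at h
  exact (le_div_iff₀ hcos).1 h

theorem Real.sin_le_mul_cos_of_le_arctan {x θ : ℝ} (h : θ ≤ arctan x) (hθ : -(π / 2) < θ) :
    sin θ ≤ x * cos θ := by
  have hθ' : θ < π / 2 := h.trans_lt (arctan_lt_pi_div_two x)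
  have hcos : 0 < cos θ := cos_pos_of_mem_Ioo ⟨hθ, hθ'⟩
  rw [← arctan_tan hθ hθ', arctan_le_arctan_iff, tan_eq_sin_div_cos] at h
  exact (div_le_iff₀ hcos).1 h

theorem Real.mul_sqrt_one_div_sq_sub_one {α : ℝ} (hα : 0 < α) :
    α * √(1 / α ^ 2 - 1) = √(1 - α ^ 2) := by
  rw [← sqrt_sq hα.le, ← sqrt_mul (sq_nonneg α), sqrt_sq hα.le]
  congr 1
  field_simp

section DiagVec

variable {ι : Type*} [Fintype ι] [DecidableEq ι]

def diagVec (μ : ι → ℂ) : ι × ι → ℂ := fun p => if p.1 = p.2 then μ p.2 else 0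

theorem sum_vecMulVec_diagVec_apply {μ : ι → ℂ} (hμ : ∀ x, ‖μ x‖ = 1) (x x' : ι) :
    ∑ y, Matrix.vecMulVec (diagVec μ) (star (diagVec μ)) (y, x) (y, x') =
      if x = x' then 1 else 0 := by
  rw [Finset.sum_eq_single x (fun y _ hy => by simp [diagVec, Matrix.vecMulVec_apply, hy])
    (by simp)]
  by_cases hx : x = x'
  · subst hx
    simp [diagVec, Matrix.vecMulVec_apply, Complex.mul_conj, Complex.normSq_eq_norm_sq, hμ]
  · simp [diagVec, Matrix.vecMulVec_apply, hx]

theorem trace_mul_vecMulVec_diagVec {M : Matrix (ι × ι) (ι × ι) ℂ} {D : ι → ℂ}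
    (hM : ∀ x x', M (x, x) (x', x') = D x * star (D x')) (μ : ι → ℂ) :
    (M * Matrix.vecMulVec (diagVec μ) (star (diagVec μ))).trace =
      star (∑ x, μ x * star (D x)) * ∑ x, μ x * star (D x) := by
  rw [Matrix.mul_vecMulVec, Matrix.trace_vecMulVec]
  simp only [dotProduct, Matrix.mulVec, diagVec, Fintype.sum_prod_type, Pi.star_apply]
  simp only [mul_ite, mul_zero, apply_ite star, star_zero, Finset.sum_ite_eq,
    Finset.mem_univ, if_true, hM, star_sum, star_mul', star_star,
    Finset.sum_mul, Finset.mul_sum]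
  rw [Finset.sum_comm]
  exact Finset.sum_congr rfl fun x _ => Finset.sum_congr rfl fun x' _ => by ring

end DiagVec

theorem Q0_apply_diag (α θ : ℝ) (y y' : Fin 2) :
    Q0 α θ (y, y) (y', y') = psi1 α θ (y, y) * star (psi1 α θ (y', y')) := by
  have h₂ : ∀ y : Fin 2, psi2 α θ (y, y) = 0 := by intro y; fin_cases y <;> simp [psi2]
  have h₃ : ∀ y : Fin 2, psi3 α θ (y, y) = 0 := by intro y; fin_cases y <;> simp [psi3]
  simp [Q0, h₂, h₃]

theorem Q0pow_apply_diag (n : ℕ) (α θ : ℝ) (x x' : Fin n → Fin 2) :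
    Q0pow n α θ (x, x) (x', x') =
      (∏ i, psi1 α θ (x i, x i)) * star (∏ i, psi1 α θ (x' i, x' i)) := by
  simp [Q0pow, Q0_apply_diag, Finset.prod_mul_distrib, star_prod]

theorem mul_norm_psi1_le {α θ c : ℝ} (hα : 0 < α) (hc : 0 < c)
    (hθ₁ : arctan (√(1 / α ^ 2 - 1) * c) ≤ θ) (hθ₂ : θ ≤ arctan (√(1 / α ^ 2 - 1) / c)) :
    c * ‖psi1 α θ (0, 0)‖ ≤ ‖psi1 α θ (1, 1)‖ ∧ c * ‖psi1 α θ (1, 1)‖ ≤ ‖psi1 α θ (0, 0)‖ := by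
  set s := √(1 / α ^ 2 - 1)
  have hθπ : θ < π / 2 := hθ₂.trans_lt (arctan_lt_pi_div_two _)
  have hθ0 : 0 ≤ θ := (arctan_nonneg.2 (by positivity)).trans hθ₁
  have hcos : 0 ≤ cos θ := cos_nonneg_of_mem_Icc ⟨by linarith, hθπ.le⟩
  have hsin : 0 ≤ sin θ := sin_nonneg_of_nonneg_of_le_pi hθ0 (by linarith)
  have hsc : s * c * cos θ ≤ sin θ := mul_cos_le_sin_of_arctan_le hθ₁ hθπ
  have hcs : c * sin θ ≤ s * cos θ := by
    have := sin_le_mul_cos_of_le_arctan hθ₂ (by linarith [pi_pos])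
    rw [div_mul_eq_mul_div, le_div_iff₀ hc] at this
    linarith
  have h₀ : ‖psi1 α θ (0, 0)‖ = α * sin θ := by
    rw [psi1, if_pos rfl, Complex.norm_real, Real.norm_eq_abs,
      abs_of_nonneg (mul_nonneg hα.le hsin)]
  have h₁ : ‖psi1 α θ (1, 1)‖ = α * s * cos θ := by
    rw [psi1, if_neg (by decide), if_pos rfl, Complex.norm_real, Real.norm_eq_abs, abs_neg,
      abs_of_nonneg (mul_nonneg (sqrt_nonneg _) hcos), mul_sqrt_one_div_sq_sub_one hα]
  rw [h₀, h₁]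
  constructor
  · calc c * (α * sin θ) = α * (c * sin θ) := by ring
      _ ≤ α * (s * cos θ) := mul_le_mul_of_nonneg_left hcs hα.le
      _ = α * s * cos θ := by ring
  · calc c * (α * s * cos θ) = α * (s * c * cos θ) := by ring
      _ ≤ α * sin θ := mul_le_mul_of_nonneg_left hsc hα.le

/-- For every `n ≥ 1`, `α ∈ (0,1]` and `θ₁ ≤ θ ≤ θ₂` (with
`θ₁ = arctan(√(1/α² − 1)·(2^{1/n} − 1))` and `θ₂ = arctan(√(1/α² − 1)/(2^{1/n} − 1))`), there
exists a positive semidefinite `X` (the Choi matrix of a channel: its partial trace over the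
first factor is the identity) with `trace(Q₀^{⊗n}·X) = 0`, i.e. Bob achieves perfect hedging,
winning at least 1 out of `n` parallel repetitions with certainty. -/
theorem stmt0 (n : ℕ) (hn : 1 ≤ n) (α : ℝ) (hα : α ∈ Set.Ioc (0 : ℝ) 1) (θ : ℝ)
    (hθ1 : Real.arctan (Real.sqrt (1 / α ^ 2 - 1) * ((2 : ℝ) ^ ((1 : ℝ) / n) - 1)) ≤ θ)
    (hθ2 : θ ≤ Real.arctan (Real.sqrt (1 / α ^ 2 - 1) / ((2 : ℝ) ^ ((1 : ℝ) / n) - 1))) :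
    ∃ X : Matrix ((Fin n → Fin 2) × (Fin n → Fin 2)) ((Fin n → Fin 2) × (Fin n → Fin 2)) ℂ,
      X.PosSemidef ∧
      (∀ x x' : Fin n → Fin 2,
        ∑ y : Fin n → Fin 2, X (y, x) (y, x') = if x = x' then 1 else 0) ∧
      Matrix.trace (Q0pow n α θ * X) = 0 := by
  have hn0 : n ≠ 0 := by omega
  have hc : 0 < (2 : ℝ) ^ ((1 : ℝ) / n) - 1 :=
    sub_pos.2 (one_lt_rpow one_lt_two (by positivity))
  obtain ⟨h₀, h₁⟩ := mul_norm_psi1_le hα.1 hc hθ1 hθ2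
  obtain ⟨μ, hμ, hμsum⟩ := exists_norm_eq_one_sum_mul_prod_fin_two_eq_zero hn0
    (fun y => star (psi1 α θ (y, y))) (by simpa only [norm_star] using h₀)
    (by simpa only [norm_star] using h₁)
  refine ⟨_, Matrix.posSemidef_vecMulVec_self_star (diagVec μ),
    sum_vecMulVec_diagVec_apply hμ, ?_⟩
  rw [trace_mul_vecMulVec_diagVec (Q0pow_apply_diag n α θ) μ]
  simp_rw [star_prod]
  rw [hμsum, mul_zero]
end

section
/- For every integer n ≥ 1, the function h : (0,1] → ℝ defined by h(α) = arctan(√(1/α² − 1)/(2^{1/n} − 1)) − arctan(√(1/α² − 1)·(2^{1/n} − 1)) attains its maximum at α = 1/√2; that is, for all α ∈ (0,1], h(α) ≤ h(1/√2). In other words, the range of measurement angles θ₂ − θ₁ for which perfect hedging occurs is largest when Alice prepares the maximally entangled state. -/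
/-- The lower endpoint `θ₁ = arctan(√(1/α² − 1)·(2^{1/n} − 1))` of the perfect hedging
interval of measurement angles. -/
noncomputable def theta1 (n : ℕ) (α : ℝ) : ℝ :=
  Real.arctan (Real.sqrt (1 / α ^ 2 - 1) * ((2 : ℝ) ^ ((1 : ℝ) / n) - 1))

/-- The upper endpoint `θ₂ = arctan(√(1/α² − 1)/(2^{1/n} − 1))` of the perfect hedging
interval of measurement angles. -/
noncomputable def theta2 (n : ℕ) (α : ℝ) : ℝ :=
  Real.arctan (Real.sqrt (1 / α ^ 2 - 1) / ((2 : ℝ) ^ ((1 : ℝ) / n) - 1))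

/-!
With `c = 2^{1/n} - 1 ∈ (0, 1]` and `s = √(1/α² - 1)`, the subtraction formula for `arctan` gives
`θ₂ - θ₁ = arctan (s (c⁻¹ - c) / (1 + s²))`. Since `c⁻¹ - c ≥ 0` and `s / (1 + s²) ≤ 1/2`, this is
largest at `s = 1`, which is `α = 1/√2`.
-/

open Real

lemma Real.arctan_sub_arctan {x y : ℝ} (h : -1 < x * y) :
    arctan x - arctan y = arctan ((x - y) / (1 + x * y)) := by
  rw [sub_eq_add_neg, ← arctan_neg, arctan_add (by linarith)]
  ring_nf

lemma arctan_div_sub_arctan_mul {c : ℝ} (hc : 0 < c) (s : ℝ) :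
    arctan (s / c) - arctan (s * c) = arctan (s * (c⁻¹ - c) / (1 + s ^ 2)) := by
  have hprod : s / c * (s * c) = s ^ 2 := by field_simp
  rw [arctan_sub_arctan (by rw [hprod]; nlinarith [sq_nonneg s])]
  congr 1
  field_simp

lemma arctan_div_sub_arctan_mul_le {c : ℝ} (hc : 0 < c) (hc1 : c ≤ 1) (s : ℝ) :
    arctan (s / c) - arctan (s * c) ≤ arctan (1 / c) - arctan c := by
  have hgap : 0 ≤ c⁻¹ - c := sub_nonneg.2 (hc1.trans (one_le_inv₀ hc |>.2 hc1))
  have hs : s / (1 + s ^ 2) ≤ 1 / 2 := by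
    rw [div_le_iff₀ (by positivity)]
    nlinarith [sq_nonneg (s - 1)]
  have hmax := arctan_div_sub_arctan_mul hc 1
  rw [one_mul] at hmax
  rw [arctan_div_sub_arctan_mul hc, hmax]
  refine arctan_strictMono.monotone ?_
  calc s * (c⁻¹ - c) / (1 + s ^ 2) = s / (1 + s ^ 2) * (c⁻¹ - c) := by ring
    _ ≤ 1 / 2 * (c⁻¹ - c) := by gcongr
    _ = 1 * (c⁻¹ - c) / (1 + 1 ^ 2) := by ring

lemma two_rpow_inv_sub_one_pos {n : ℕ} (hn : 1 ≤ n) : 0 < (2 : ℝ) ^ ((1 : ℝ) / n) - 1 :=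
  sub_pos.2 (one_lt_rpow one_lt_two (by positivity))

lemma two_rpow_inv_sub_one_le_one (n : ℕ) : (2 : ℝ) ^ ((1 : ℝ) / n) - 1 ≤ 1 := by
  have := rpow_le_self_of_one_le one_le_two ((one_div (n : ℝ)).trans_le (Nat.cast_inv_le_one n))
  linarith

lemma sqrt_one_div_sq_sub_one_of_inv_sqrt_two : √(1 / (1 / √2) ^ 2 - 1) = 1 := by
  rw [div_pow, one_pow, sq_sqrt zero_le_two]
  norm_num

/-- For every integer `n ≥ 1`, the function `h : (0,1] → ℝ` given by
`h(α) = θ₂ − θ₁` (the length of the interval of measurement angles for which perfect hedging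
occurs) attains its maximum at `α = 1/√2`, i.e. for the maximally entangled state. -/
theorem stmt1 (n : ℕ) (hn : 1 ≤ n) :
    ∀ α ∈ Set.Ioc (0 : ℝ) 1,
      theta2 n α - theta1 n α ≤ theta2 n (1 / Real.sqrt 2) - theta1 n (1 / Real.sqrt 2) := by
  intro α _
  unfold theta1 theta2
  rw [sqrt_one_div_sq_sub_one_of_inv_sqrt_two, one_mul]
  exact arctan_div_sub_arctan_mul_le (two_rpow_inv_sub_one_pos hn)
    (two_rpow_inv_sub_one_le_one n) _
end

section
/- Let n ≥ 1 be an integer, α ∈ (0,1], and θ with arctan(√(1/α² − 1)·(2^{1/n} − 1)) ≤ θ ≤ arctan(√(1/α² − 1)/(2^{1/n} − 1)). Then there exists a function c : (Fin n → Fin 2) → ℂ with |c(r)| = 1 for every bit string r, such that Σ over all r ∈ (Fin n → Fin 2) of c(r)·(α·sin θ)^{n−|r|}·(√(1−α²)·cos θ)^{|r|} = 0. Equivalently, there is a diagonal unitary strategy for Bob (with diagonal entries of modulus one) under which the amplitude for losing all n parallel repetitions vanishes, i.e., Bob achieves perfect hedging of 1 out of n repetitions. -/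
/-!
With `a = α sin θ` and `b = √(1 - α²) cos θ`, both nonnegative, the bounds on `θ` say exactly
that `(2^{1/n} - 1) · max a b ≤ min a b`, i.e. `2 · max(a, b)ⁿ ≤ (a + b)ⁿ = ∑_r a^{n-|r|} b^{|r|}`.
So no weight `a^{n-|r|} b^{|r|}` exceeds the sum of the others, and unit complex numbers `c r`
closing the "polygon" exist. For the polygon: let `w j` be the largest weight. Choosing signs
greedily makes `|∑_{i ≠ j} ± w i| ≤ w j`, while equal phases give `∑_{i ≠ j} w i ≥ w j`; the
torus of phases is connected, so some phases give `‖∑_{i ≠ j} c i w i‖ = w j`, and one more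
phase for `j` cancels this sum.
-/

open scoped BigOperators

/-- The Hamming weight (number of ones) of a bit string `r : Fin n → Fin 2`. -/
def bitWeight {n : ℕ} (r : Fin n → Fin 2) : ℕ := ∑ i, (r i : ℕ)

open Finset

section Polygon

open Complex

variable {ι : Type*}

theorem exists_sign_abs_sum_mul_le (s : Finset ι) (w : ι → ℝ) {M : ℝ} (hM : 0 ≤ M)
    (hw : ∀ i ∈ s, 0 ≤ w i ∧ w i ≤ M) :
    ∃ ε : ι → ℝ, (∀ i, ε i = 1 ∨ ε i = -1) ∧ |∑ i ∈ s, ε i * w i| ≤ M := by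
  classical
  induction s using Finset.induction_on with
  | empty => exact ⟨fun _ => 1, fun _ => Or.inl rfl, by simpa using hM⟩
  | insert i s hi ih =>
    obtain ⟨ε, hε, hsum⟩ := ih fun j hj => hw j (mem_insert_of_mem hj)
    obtain ⟨hwi, hwiM⟩ := hw i (mem_insert_self i s)
    set y := ∑ j ∈ s, ε j * w j
    set e : ℝ := if 0 ≤ y then -1 else 1 with he
    refine ⟨Function.update ε i e, fun j => ?_, ?_⟩
    · rcases eq_or_ne j i with rfl | hj
      · rw [Function.update_self, he]; split_ifs <;> simp
      · rw [Function.update_of_ne hj]; exact hε j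
    · rw [sum_insert hi, Function.update_self,
        sum_congr rfl fun j hj => by rw [Function.update_of_ne (ne_of_mem_of_not_mem hj hi)]]
      rw [abs_le] at hsum ⊢
      rw [he]; split_ifs <;> constructor <;> linarith

theorem exists_norm_eq_one_sum_mul_eq_zero [Fintype ι] (w : ι → ℝ) (hw : ∀ i, 0 ≤ w i)
    (hpoly : ∀ i, 2 * w i ≤ ∑ j, w j) :
    ∃ c : ι → ℂ, (∀ i, ‖c i‖ = 1) ∧ ∑ i, c i * w i = 0 := by
  classical
  cases isEmpty_or_nonempty ι
  · exact ⟨1, by simp, by simp⟩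
  obtain ⟨j, hj⟩ := Finite.exists_max w
  set F : (ι → ℝ) → ℝ := fun θ => ‖∑ i ∈ univ.erase j, exp (θ i * I) * w i‖ with hF
  have hFc : Continuous F := by fun_prop
  have hF0 : w j ≤ F 0 := by
    have := hpoly j
    rw [← add_sum_erase _ _ (mem_univ j)] at this
    simp only [hF, Pi.zero_apply, ofReal_zero, zero_mul, Complex.exp_zero, one_mul]
    rw [← ofReal_sum, norm_real, Real.norm_eq_abs]
    exact (by linarith : w j ≤ _).trans (le_abs_self _)
  obtain ⟨ε, hε, hsum⟩ := exists_sign_abs_sum_mul_le (univ.erase j) w (hw j)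
    fun i _ => ⟨hw i, hj i⟩
  have hphase : ∀ i, ∃ φ : ℝ, exp (φ * I) = ε i := fun i => by
    rcases hε i with h | h
    · exact ⟨0, by simp [h]⟩
    · exact ⟨Real.pi, by simp [h]⟩
  choose φ hφ using hphase
  have hFφ : F φ ≤ w j := by
    simp only [hF, hφ, ← ofReal_mul, ← ofReal_sum, norm_real, Real.norm_eq_abs, hsum]
  obtain ⟨θ, hθ⟩ := intermediate_value_univ φ 0 hFc ⟨hFφ, hF0⟩
  set T := ∑ i ∈ univ.erase j, exp (θ i * I) * w i
  refine ⟨fun i => exp (Function.update θ j (arg (-T)) i * I),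
    fun i => norm_exp_ofReal_mul_I _, ?_⟩
  dsimp only
  rw [← add_sum_erase _ _ (mem_univ j), Function.update_self,
    sum_congr rfl fun i hi => by rw [Function.update_of_ne (ne_of_mem_erase hi)]]
  have : (w j : ℂ) = ‖-T‖ := by rw [norm_neg]; exact_mod_cast hθ.symm
  rw [this, mul_comm, norm_mul_exp_arg_mul_I]
  ring

end Polygon

theorem pow_sub_mul_pow_le_max_pow {R : Type*} [CommSemiring R] [LinearOrder R]
    [IsOrderedRing R] {a b : R} (ha : 0 ≤ a) (hb : 0 ≤ b) {k n : ℕ} (hk : k ≤ n) :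
    a ^ (n - k) * b ^ k ≤ max a b ^ n :=
  calc a ^ (n - k) * b ^ k ≤ max a b ^ (n - k) * max a b ^ k := by
        gcongr
        exacts [le_max_left a b, le_max_right a b]
    _ = max a b ^ n := by rw [← pow_add, Nat.sub_add_cancel hk]

section BitString

variable {n : ℕ}

theorem bitWeight_le (r : Fin n → Fin 2) : bitWeight r ≤ n := by
  calc bitWeight r ≤ ∑ _i : Fin n, 1 := sum_le_sum fun i _ => Fin.is_le (r i)
    _ = n := by simp

theorem sum_one_sub_val_eq_sub_bitWeight (r : Fin n → Fin 2) :
    ∑ i, (1 - (r i : ℕ)) = n - bitWeight r := by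
  have h : ∑ i, ((1 - (r i : ℕ)) + r i) = n := by
    simp [fun i => Nat.sub_add_cancel (Fin.is_le (r i))]
  rw [sum_add_distrib] at h
  unfold bitWeight
  omega

theorem sum_pow_sub_bitWeight_mul_pow {R : Type*} [CommSemiring R] (A B : R) :
    ∑ r : Fin n → Fin 2, A ^ (n - bitWeight r) * B ^ bitWeight r = (A + B) ^ n := by
  have hbit : A + B = ∑ x : Fin 2, A ^ (1 - (x : ℕ)) * B ^ (x : ℕ) := by simp
  rw [hbit, ← Fin.prod_const, prod_univ_sum, Fintype.piFinset_univ]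
  refine sum_congr rfl fun r _ => ?_
  rw [prod_mul_distrib, prod_pow_eq_pow_sum, prod_pow_eq_pow_sum,
    sum_one_sub_val_eq_sub_bitWeight]
  rfl

theorem exists_norm_eq_one_sum_bitString_eq_zero {a b : ℝ} (ha : 0 ≤ a) (hb : 0 ≤ b)
    (hab : 2 * max a b ^ n ≤ (a + b) ^ n) :
    ∃ c : (Fin n → Fin 2) → ℂ, (∀ r, ‖c r‖ = 1) ∧
      ∑ r, c r * (a : ℂ) ^ (n - bitWeight r) * (b : ℂ) ^ bitWeight r = 0 := by
  have hpoly (r : Fin n → Fin 2) : 2 * (a ^ (n - bitWeight r) * b ^ bitWeight r) ≤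
      ∑ r' : Fin n → Fin 2, a ^ (n - bitWeight r') * b ^ bitWeight r' := by
    rw [sum_pow_sub_bitWeight_mul_pow]
    refine le_trans ?_ hab
    gcongr
    exact pow_sub_mul_pow_le_max_pow ha hb (bitWeight_le r)
  obtain ⟨c, hc, hsum⟩ := exists_norm_eq_one_sum_mul_eq_zero _
    (fun r => mul_nonneg (pow_nonneg ha _) (pow_nonneg hb _)) hpoly
  refine ⟨c, hc, ?_⟩
  simpa only [Complex.ofReal_mul, Complex.ofReal_pow, mul_assoc] using hsum

end BitString

theorem two_mul_max_pow_le_add_pow {R : Type*} [CommRing R] [LinearOrder R]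
    [IsStrictOrderedRing R] {a b s : R} {n : ℕ} (hs : s ^ n = 2) (hs0 : 0 ≤ s)
    (ha : 0 ≤ a) (hab : (s - 1) * a ≤ b) (hba : (s - 1) * b ≤ a) :
    2 * max a b ^ n ≤ (a + b) ^ n := by
  have : s * max a b ≤ a + b := by
    rw [mul_max_of_nonneg _ _ hs0]
    exact max_le (by linarith) (by linarith)
  calc 2 * max a b ^ n = (s * max a b) ^ n := by rw [mul_pow, hs]
    _ ≤ (a + b) ^ n := by gcongr

namespace Real

theorem mul_cos_le_sin_of_arctan_le_s9 {x θ : ℝ} (h : arctan x ≤ θ) (hθ : θ < π / 2) :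
    x * cos θ ≤ sin θ := by
  have hθ' : θ ∈ Set.Ioo (-(π / 2)) (π / 2) := ⟨(neg_pi_div_two_lt_arctan x).trans_le h, hθ⟩
  have htan : x ≤ tan θ := by
    simpa [tan_arctan] using strictMonoOn_tan.monotoneOn (arctan_mem_Ioo x) hθ' h
  rwa [tan_eq_sin_div_cos, le_div_iff₀ (cos_pos_of_mem_Ioo hθ')] at htan

theorem sin_le_mul_cos_of_le_arctan_s9 {x θ : ℝ} (h : θ ≤ arctan x) (hθ : -(π / 2) < θ) :
    sin θ ≤ x * cos θ := by
  have hθ' : θ ∈ Set.Ioo (-(π / 2)) (π / 2) := ⟨hθ, h.trans_lt (arctan_lt_pi_div_two x)⟩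
  have htan : tan θ ≤ x := by
    simpa [tan_arctan] using strictMonoOn_tan.monotoneOn hθ' (arctan_mem_Ioo x) h
  rwa [tan_eq_sin_div_cos, div_le_iff₀ (cos_pos_of_mem_Ioo hθ')] at htan

end Real

open Real

/-- Let `n ≥ 1`, `α ∈ (0,1]`, and
`arctan(√(1/α² − 1)·(2^{1/n} − 1)) ≤ θ ≤ arctan(√(1/α² − 1)/(2^{1/n} − 1))`. Then there is a
function `c` on bit strings with `|c(r)| = 1` for all `r`, such that
`Σ_r c(r)·(α sin θ)^{n−|r|}·(√(1−α²) cos θ)^{|r|} = 0`; i.e. there is a diagonal unitary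
strategy for Bob under which the amplitude of losing all `n` parallel repetitions vanishes. -/
theorem stmt9 (n : ℕ) (hn : 1 ≤ n) (α : ℝ) (hα : α ∈ Set.Ioc (0 : ℝ) 1) (θ : ℝ)
    (hθ1 : Real.arctan (Real.sqrt (1 / α ^ 2 - 1) * ((2 : ℝ) ^ ((1 : ℝ) / n) - 1)) ≤ θ)
    (hθ2 : θ ≤ Real.arctan (Real.sqrt (1 / α ^ 2 - 1) / ((2 : ℝ) ^ ((1 : ℝ) / n) - 1))) :
    ∃ c : (Fin n → Fin 2) → ℂ,
      (∀ r, ‖c r‖ = 1) ∧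
      ∑ r : Fin n → Fin 2,
        c r * ((α * Real.sin θ : ℝ) : ℂ) ^ (n - bitWeight r) *
          ((Real.sqrt (1 - α ^ 2) * Real.cos θ : ℝ) : ℂ) ^ bitWeight r = 0 := by
  have hs : ((2 : ℝ) ^ ((1 : ℝ) / n)) ^ n = 2 := by
    rw [one_div, rpow_inv_natCast_pow zero_le_two (by omega)]
  set s : ℝ := 2 ^ ((1 : ℝ) / n)
  set t := √(1 / α ^ 2 - 1)
  have hs1 : 0 < s - 1 := sub_pos.2 (one_lt_rpow one_lt_two (by positivity))
  have hsqrt : √(1 - α ^ 2) = α * t := by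
    have : 1 - α ^ 2 = (1 / α ^ 2 - 1) * α ^ 2 := by field_simp [hα.1.ne']
    rw [this, sqrt_mul' _ (sq_nonneg α), sqrt_sq hα.1.le, mul_comm]
  have hθ_lt : θ < π / 2 := hθ2.trans_lt (arctan_lt_pi_div_two _)
  have hθ_gt : -(π / 2) < θ := (neg_pi_div_two_lt_arctan _).trans_le hθ1
  have hb : 0 ≤ √(1 - α ^ 2) * cos θ :=
    mul_nonneg (sqrt_nonneg _) (cos_pos_of_mem_Ioo ⟨hθ_gt, hθ_lt⟩).le
  have hba : (s - 1) * (√(1 - α ^ 2) * cos θ) ≤ α * sin θ := by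
    have := mul_cos_le_sin_of_arctan_le_s9 hθ1 hθ_lt
    rw [hsqrt]
    nlinarith [hα.1]
  have hab : (s - 1) * (α * sin θ) ≤ √(1 - α ^ 2) * cos θ := by
    have := sin_le_mul_cos_of_le_arctan_s9 hθ2 hθ_gt
    rw [div_mul_eq_mul_div, le_div_iff₀ hs1] at this
    rw [hsqrt]
    nlinarith [hα.1]
  have ha : 0 ≤ α * sin θ := (mul_nonneg hs1.le hb).trans hba
  exact exists_norm_eq_one_sum_bitString_eq_zero ha hb
    (two_mul_max_pow_le_add_pow hs (by linarith) ha hab hba)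
end

section
/- Let Y and X be finite nonempty types, let C be a positive semidefinite complex matrix indexed by (Y × X) × (Y × X), and let X₀ be a positive semidefinite matrix over the same index type whose partial trace over Y is the identity: for all x, x', Σ_y X₀((y,x),(y,x')) = if x = x' then 1 else 0. Define the X × X matrix W by W(x, x') = Σ_y (C·X₀)((y,x),(y,x')). If the matrix 1_Y ⊗ W, with entries ((y,x),(y',x')) ↦ (if y = y' then W(x,x') else 0), satisfies 1_Y ⊗ W ≤ C, then X₀ is optimal for the primal semidefinite program: for every positive semidefinite X' over (Y × X) × (Y × X) whose partial trace over Y is the identity, the real number trace(C·X') satisfies trace(C·X') ≥ trace(C·X₀). -/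
open scoped BigOperators ComplexOrder

/-!
Weak duality. If `1_Y ⊗ W ≤ C` and `ρ` is positive semidefinite with `Tr_Y ρ = 1`, then
`tr(C ρ) = tr((C - 1_Y ⊗ W) ρ) + tr(W · Tr_Y ρ) ≥ tr W`, since the trace of a product of
two positive semidefinite matrices is nonnegative. For `W = Tr_Y (C X₀)` the bound `tr W`
is exactly `tr(C X₀)`.
-/

open scoped Kronecker

namespace Matrix

section PartialTrace

variable {Y X R : Type*}

def partialTraceLeft [Fintype Y] [AddCommMonoid R] (M : Matrix (Y × X) (Y × X) R) :
    Matrix X X R :=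
  of fun x x' => ∑ y, M (y, x) (y, x')

theorem trace_partialTraceLeft [Fintype Y] [Fintype X] [AddCommMonoid R]
    (M : Matrix (Y × X) (Y × X) R) : (partialTraceLeft M).trace = M.trace := by
  simp only [trace, diag, partialTraceLeft, of_apply, Fintype.sum_prod_type]
  exact Finset.sum_comm

theorem one_kronecker_eq_of [MulZeroOneClass R] [DecidableEq Y] (W : Matrix X X R) :
    (1 : Matrix Y Y R) ⊗ₖ W = of fun p q => if p.1 = q.1 then W p.2 q.2 else 0 := by
  ext p q
  simp [one_apply]

theorem trace_one_kronecker_mul [Fintype Y] [Fintype X] [CommSemiring R] [DecidableEq Y]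
    (W : Matrix X X R) (M : Matrix (Y × X) (Y × X) R) :
    ((1 : Matrix Y Y R) ⊗ₖ W * M).trace = (W * partialTraceLeft M).trace := by
  simp only [one_kronecker_eq_of, trace, diag, mul_apply, of_apply, partialTraceLeft,
    Fintype.sum_prod_type, ite_mul, zero_mul, Finset.sum_ite_irrel, Finset.sum_const_zero,
    Finset.sum_ite_eq, Finset.mem_univ, if_true, Finset.mul_sum]
  rw [Finset.sum_comm]
  exact Finset.sum_congr rfl fun x _ => Finset.sum_comm

end PartialTrace

open scoped MatrixOrder in
theorem PosSemidef.trace_mul_nonneg {n 𝕜 : Type*} [Fintype n] [DecidableEq n] [RCLike 𝕜]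
    {A B : Matrix n n 𝕜} (hA : A.PosSemidef) (hB : B.PosSemidef) : 0 ≤ (A * B).trace := by
  set S := CFC.sqrt A
  have hS : star S = S := (nonneg_iff_posSemidef.mp (CFC.sqrt_nonneg A)).isHermitian
  calc (0 : 𝕜) ≤ (star S * B * S).trace :=
        (nonneg_iff_posSemidef.mp (star_left_conjugate_nonneg hB.nonneg S)).trace_nonneg
    _ = (S * S * B).trace := by rw [hS, mul_assoc, trace_mul_comm, mul_assoc, trace_mul_comm]
    _ = (A * B).trace := by rw [CFC.sqrt_mul_sqrt_self A hA.nonneg]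

theorem trace_le_trace_mul_of_posSemidef_sub_one_kronecker {Y X 𝕜 : Type*} [Fintype Y]
    [Fintype X] [DecidableEq Y] [DecidableEq X] [RCLike 𝕜]
    {C ρ : Matrix (Y × X) (Y × X) 𝕜} {W : Matrix X X 𝕜}
    (hdual : (C - (1 : Matrix Y Y 𝕜) ⊗ₖ W).PosSemidef) (hρ : ρ.PosSemidef)
    (hρY : partialTraceLeft ρ = 1) :
    W.trace ≤ (C * ρ).trace := by
  have hslack : 0 ≤ ((C - (1 : Matrix Y Y 𝕜) ⊗ₖ W) * ρ).trace := hdual.trace_mul_nonneg hρ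
  rwa [sub_mul, trace_sub, trace_one_kronecker_mul, hρY, mul_one, sub_nonneg] at hslack

end Matrix

open Matrix in
theorem stmt10_general {Y X : Type*} [Fintype Y] [Fintype X]
    [DecidableEq Y] [DecidableEq X]
    (C : Matrix (Y × X) (Y × X) ℂ)
    (X₀ : Matrix (Y × X) (Y × X) ℂ)
    (hdual : (C - Matrix.of fun p q : Y × X =>
        if p.1 = q.1 then ∑ y : Y, (C * X₀) (y, p.2) (y, q.2) else 0).PosSemidef) :
    ∀ X' : Matrix (Y × X) (Y × X) ℂ, X'.PosSemidef →
      (∀ x x' : X, ∑ y : Y, X' (y, x) (y, x') = if x = x' then 1 else 0) →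
      (Matrix.trace (C * X₀)).re ≤ (Matrix.trace (C * X')).re := by
  intro X' hX' hX'Y
  have hW : (C - (1 : Matrix Y Y ℂ) ⊗ₖ partialTraceLeft (C * X₀)).PosSemidef := by
    rwa [one_kronecker_eq_of]
  have hle := trace_le_trace_mul_of_posSemidef_sub_one_kronecker hW hX' (ext hX'Y)
  rw [trace_partialTraceLeft] at hle
  exact (Complex.le_def.mp hle).1

/-- complementary slackness / optimality criterion for the hedging SDP.
If `C` is positive semidefinite, `X₀` is a primal-feasible Choi matrix (positive semidefinite
with partial trace over `Y` equal to the identity), and the operator `1_Y ⊗ W` built from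
`W(x,x') = Σ_y (C·X₀)((y,x),(y,x'))` satisfies `1_Y ⊗ W ≤ C`, then `X₀` is optimal for the
primal problem: every primal-feasible `X'` has `trace(C·X') ≥ trace(C·X₀)`. -/
theorem stmt10 {Y X : Type*} [Fintype Y] [Fintype X] [Nonempty Y] [Nonempty X]
    [DecidableEq Y] [DecidableEq X]
    (C : Matrix (Y × X) (Y × X) ℂ) (hC : C.PosSemidef)
    (X₀ : Matrix (Y × X) (Y × X) ℂ) (hX₀ : X₀.PosSemidef)
    (hpt : ∀ x x' : X, ∑ y : Y, X₀ (y, x) (y, x') = if x = x' then 1 else 0)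
    (hdual : (C - Matrix.of fun p q : Y × X =>
        if p.1 = q.1 then ∑ y : Y, (C * X₀) (y, p.2) (y, q.2) else 0).PosSemidef) :
    ∀ X' : Matrix (Y × X) (Y × X) ℂ, X'.PosSemidef →
      (∀ x x' : X, ∑ y : Y, X' (y, x) (y, x') = if x = x' then 1 else 0) →
      (Matrix.trace (C * X₀)).re ≤ (Matrix.trace (C * X')).re :=
  stmt10_general C X₀ hdual
end

section
/- Let Q and E be positive semidefinite complex matrices of the same finite size with Q ≤ E and E ≠ 0. Then the supremum of the set of real numbers { Re(trace(Q·X)) / Re(trace(E·X)) : X positive semidefinite with trace(E·X) ≠ 0 } equals the infimum of the set { t : ℝ, t ≥ 0 and Q ≤ t·E }. This common value is the optimal probability for Bob to pass a single repetition of the verification protocol when he is allowed to return no answer (in which case the protocol restarts). -/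
/-!
Weak duality: if `t • E - Q ≥ 0` then `tr((t • E - Q) X) ≥ 0` for every `X ≥ 0`, so every ratio
`tr(Q X) / tr(E X)` is at most `t`. Both extrema are attained: the supremum `s` of the ratios
satisfies `s • E - Q ≥ 0`, as one sees by testing against the rank-one matrices `x xᴴ`; on a
vector with `xᴴ E x = 0` the bound `0 ≤ Q ≤ E` forces `xᴴ Q x = 0` as well.
-/

open scoped ComplexOrder

namespace Matrix

variable {𝕜 n : Type*} [RCLike 𝕜] [Fintype n]

lemma IsHermitian.posSemidef_of_re_dotProduct_nonneg {M : Matrix n n 𝕜} (hM : M.IsHermitian)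
    (h : ∀ x, 0 ≤ RCLike.re (star x ⬝ᵥ (M *ᵥ x))) : M.PosSemidef :=
  .of_dotProduct_mulVec_nonneg hM fun x ↦
    RCLike.nonneg_iff.mpr ⟨h x, hM.im_star_dotProduct_mulVec_self x⟩

lemma trace_mul_vecMulVec_star (M : Matrix n n 𝕜) (x : n → 𝕜) :
    trace (M * vecMulVec x (star x)) = star x ⬝ᵥ (M *ᵥ x) := by
  rw [mul_vecMulVec, trace_vecMulVec, dotProduct_comm]

namespace PosSemidef

lemma trace_mul_nonneg_s11 {A B : Matrix n n 𝕜} (hA : A.PosSemidef) (hB : B.PosSemidef) :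
    0 ≤ trace (A * B) := by
  classical
  open MatrixOrder in obtain ⟨C, rfl⟩ := CStarAlgebra.nonneg_iff_eq_star_mul_self.mp hB.nonneg
  rw [← mul_assoc, trace_mul_cycle]
  exact (hA.mul_mul_conjTranspose_same C).trace_nonneg

lemma re_trace_mul_nonneg {A B : Matrix n n 𝕜} (hA : A.PosSemidef) (hB : B.PosSemidef) :
    0 ≤ RCLike.re (trace (A * B)) :=
  (RCLike.nonneg_iff.mp (hA.trace_mul_nonneg_s11 hB)).1

lemma re_trace_mul_pos {A B : Matrix n n 𝕜} (hA : A.PosSemidef) (hB : B.PosSemidef)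
    (h : trace (A * B) ≠ 0) : 0 < RCLike.re (trace (A * B)) :=
  (RCLike.pos_iff.mp ((hA.trace_mul_nonneg_s11 hB).lt_of_ne' h)).1

lemma re_trace_mul_div_le {Q E X : Matrix n n 𝕜} {t : ℝ} (ht : (t • E - Q).PosSemidef)
    (hE : E.PosSemidef) (hX : X.PosSemidef) (hEX : trace (E * X) ≠ 0) :
    RCLike.re (trace (Q * X)) / RCLike.re (trace (E * X)) ≤ t := by
  rw [div_le_iff₀ (hE.re_trace_mul_pos hX hEX)]
  have h := ht.re_trace_mul_nonneg hX
  rw [sub_mul, trace_sub, smul_mul_assoc, trace_smul, map_sub, RCLike.smul_re] at h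
  linarith

lemma smul_sub_of_re_trace_mul_div_le {Q E : Matrix n n 𝕜} {s : ℝ} (hQ : Q.PosSemidef)
    (hE : E.PosSemidef) (hQE : (E - Q).PosSemidef)
    (h : ∀ X : Matrix n n 𝕜, X.PosSemidef → trace (E * X) ≠ 0 →
      RCLike.re (trace (Q * X)) / RCLike.re (trace (E * X)) ≤ s) :
    (s • E - Q).PosSemidef := by
  refine ((hE.1.smul (IsSelfAdjoint.all s)).sub hQ.1).posSemidef_of_re_dotProduct_nonneg
    fun x ↦ ?_
  have hq := hQ.re_dotProduct_nonneg x
  have hqe := hQE.re_dotProduct_nonneg x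
  simp only [sub_mulVec, smul_mulVec, dotProduct_sub, dotProduct_smul, map_sub,
    RCLike.smul_re] at hqe ⊢
  rcases lt_or_ge 0 (RCLike.re (star x ⬝ᵥ (E *ᵥ x))) with he | he
  · have hEx : trace (E * vecMulVec x (star x)) ≠ 0 := by
      rw [trace_mul_vecMulVec_star]
      exact fun h0 ↦ he.ne' (by rw [h0, map_zero])
    have hx := h _ (posSemidef_vecMulVec_self_star x) hEx
    rw [trace_mul_vecMulVec_star, trace_mul_vecMulVec_star, div_le_iff₀ he] at hx
    linarith
  · have he0 : RCLike.re (star x ⬝ᵥ (E *ᵥ x)) = 0 := by linarith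
    have hq0 : RCLike.re (star x ⬝ᵥ (Q *ᵥ x)) = 0 := by linarith
    simp [he0, hq0]

end PosSemidef

end Matrix

theorem stmt11_general {d : Type*} [Fintype d]
    (Q E : Matrix d d ℂ) (hQ : Q.PosSemidef) (hE : E.PosSemidef)
    (hQE : (E - Q).PosSemidef) (hEne : E ≠ 0) :
    sSup {v : ℝ | ∃ X : Matrix d d ℂ, X.PosSemidef ∧ Matrix.trace (E * X) ≠ 0 ∧
        v = (Matrix.trace (Q * X)).re / (Matrix.trace (E * X)).re}
      = sInf {t : ℝ | 0 ≤ t ∧ (t • E - Q).PosSemidef} := by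
  classical
  set S := {v : ℝ | ∃ X : Matrix d d ℂ, X.PosSemidef ∧ Matrix.trace (E * X) ≠ 0 ∧
    v = (Matrix.trace (Q * X)).re / (Matrix.trace (E * X)).re}
  set T := {t : ℝ | 0 ≤ t ∧ (t • E - Q).PosSemidef}
  have h1T : (1 : ℝ) ∈ T := ⟨zero_le_one, by rwa [one_smul]⟩
  have hweak : ∀ v ∈ S, ∀ t ∈ T, v ≤ t := by
    rintro _ ⟨X, hX, hEX, rfl⟩ t ⟨-, ht⟩
    exact ht.re_trace_mul_div_le hE hX hEX
  have hSne : S.Nonempty :=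
    ⟨_, 1, .one, by simpa [hE.trace_eq_zero_iff] using hEne, rfl⟩
  have hSbdd : BddAbove S := ⟨1, fun v hv ↦ hweak v hv 1 h1T⟩
  refine le_antisymm (csSup_le hSne fun v hv ↦ le_csInf ⟨1, h1T⟩ (hweak v hv)) ?_
  refine csInf_le ⟨0, fun t ht ↦ ht.1⟩ ⟨?_, ?_⟩
  · refine Real.sSup_nonneg ?_
    rintro _ ⟨X, hX, -, rfl⟩
    exact div_nonneg (hQ.re_trace_mul_nonneg hX) (hE.re_trace_mul_nonneg hX)
  · exact hQ.smul_sub_of_re_trace_mul_div_le hE hQE fun X hX hEX ↦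
      le_csSup hSbdd ⟨X, hX, hEX, rfl⟩

/-- Let `Q ≤ E` be positive semidefinite with `E ≠ 0`. The supremum of
`Re(tr(Q·X))/Re(tr(E·X))` over positive semidefinite `X` with `tr(E·X) ≠ 0` equals the
infimum of `{t ≥ 0 : Q ≤ t·E}`; this is the optimal probability for Bob to pass a single
repetition of the verification protocol when he may return no answer (restarting it). -/
theorem stmt11 {d : Type*} [Fintype d] [DecidableEq d] [Nonempty d]
    (Q E : Matrix d d ℂ) (hQ : Q.PosSemidef) (hE : E.PosSemidef)
    (hQE : (E - Q).PosSemidef) (hEne : E ≠ 0) :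
    sSup {v : ℝ | ∃ X : Matrix d d ℂ, X.PosSemidef ∧ Matrix.trace (E * X) ≠ 0 ∧
        v = (Matrix.trace (Q * X)).re / (Matrix.trace (E * X)).re}
      = sInf {t : ℝ | 0 ≤ t ∧ (t • E - Q).PosSemidef} :=
  stmt11_general Q E hQ hE hQE hEne
end

section
/- Let A and B be complex Hermitian matrices of the same finite size with 0 ≤ A ≤ B and B·B = B (B an orthogonal projection). Then the spectral norm satisfies ‖A ⊗ₖ B + B ⊗ₖ A − A ⊗ₖ A‖ = 2·‖A‖ − ‖A‖². Equivalently, the optimal probability of winning at least one of two parallel repetitions in the verification model with abstention equals 1 − (1 − ‖A‖)², so Bob gains nothing over playing the two repetitions independently and no quantum hedging is possible. -/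
open scoped ComplexOrder Kronecker

/-- The ℓ²→ℓ² operator norm (spectral norm, largest singular value) of a square complex
matrix, via the associated continuous linear map on Euclidean space. -/
noncomputable def specNorm {m : Type*} [Fintype m] [DecidableEq m] (M : Matrix m m ℂ) : ℝ :=
  ‖Matrix.toEuclideanCLM (𝕜 := ℂ) M‖

/-!
Since `0 ≤ A ≤ B` with `B` a projection, `B * A = A` and `A ≤ ‖A‖ • B`. Writing `a = ‖A‖` and
`M = A ⊗ₖ B + B ⊗ₖ A - A ⊗ₖ A`,
`(2a - a²) • 1 - M = (2a - a²) • (1 - B ⊗ₖ B) + (a • B - A) ⊗ₖ (B - A) + (1 - a) • B ⊗ₖ (a • B - A)`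
is a sum of positive semidefinite matrices, so `‖M‖ ≤ 2a - a²`. Conversely, an eigenvector `v` of
`A` for the eigenvalue `a > 0` satisfies `B v = v`, so `v ⊗ v` is an eigenvector of `M` for the
eigenvalue `2a - a²`.
-/

-- With the L2 operator norm on matrices, `‖M‖` unfolds to `specNorm M` (`Matrix.cstar_norm_def`).
open scoped MatrixOrder Matrix.Norms.L2Operator

namespace IsStarProjection

variable {A : Type*} [CStarAlgebra A] [PartialOrder A] [StarOrderedRing A] {a p : A}

lemma le_norm_smul_of_nonneg_of_le (hp : IsStarProjection p) (ha : 0 ≤ a) (hap : a ≤ p) :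
    a ≤ ‖a‖ • p :=
  calc a = star p * a * p := by
        rw [hp.isSelfAdjoint.star_eq, hp.conjugate_of_nonneg_of_le ha hap]
    _ ≤ star p * algebraMap ℝ A ‖a‖ * p :=
        star_left_conjugate_le_conjugate (IsSelfAdjoint.of_nonneg ha).le_algebraMap_norm_self p
    _ = ‖a‖ • p := by
        rw [hp.isSelfAdjoint.star_eq, Algebra.algebraMap_eq_smul_one, mul_smul_comm, mul_one,
          smul_mul_assoc, hp.isIdempotentElem.eq]

lemma norm_le_one_of_nonneg_of_le (hp : IsStarProjection p) (ha : 0 ≤ a) (hap : a ≤ p) :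
    ‖a‖ ≤ 1 :=
  (CStarAlgebra.norm_le_norm_of_nonneg_of_le ha hap).trans (hp.norm_le p)

end IsStarProjection

namespace Matrix

section CommRing

variable {R m n : Type*}

lemma smul_one_sub_kronecker_add_sub {S : Type*} [CommRing S] [CommRing R] [Algebra S R]
    [DecidableEq n] (c : S) (A B : Matrix n n R) :
    (2 * c - c ^ 2) • (1 : Matrix (n × n) (n × n) R) - (A ⊗ₖ B + B ⊗ₖ A - A ⊗ₖ A)
      = (2 * c - c ^ 2) • (1 - B ⊗ₖ B) + (c • B - A) ⊗ₖ (B - A)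
        + (1 - c) • (B ⊗ₖ (c • B - A)) := by
  ext ⟨i, k⟩ ⟨j, l⟩
  simp only [add_apply, sub_apply, smul_apply, kroneckerMap_apply, one_apply]
  simp only [Algebra.smul_def, map_sub, map_mul, map_pow, map_one, map_ofNat]
  split_ifs <;> ring

variable [Fintype m] [Fintype n]

lemma kronecker_mulVec_kronecker [CommSemiring R] (P : Matrix m m R) (Q : Matrix n n R)
    (x : m → R) (y : n → R) :
    (P ⊗ₖ Q) *ᵥ (fun i => x i.1 * y i.2) = fun i => (P *ᵥ x) i.1 * (Q *ᵥ y) i.2 := by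
  funext ⟨i, k⟩
  simp only [mulVec, dotProduct, kroneckerMap_apply, Fintype.sum_prod_type, Finset.sum_mul_sum]
  exact Finset.sum_congr rfl fun j _ => Finset.sum_congr rfl fun l _ => by ring

lemma kronecker_add_sub_mulVec_of_mulVec_eq_smul [CommRing R] {A B : Matrix n n R} {v : n → R}
    {c : R} (hA : A *ᵥ v = c • v) (hB : B *ᵥ v = v) :
    (A ⊗ₖ B + B ⊗ₖ A - A ⊗ₖ A) *ᵥ (fun i => v i.1 * v i.2)
      = (2 * c - c ^ 2) • fun i => v i.1 * v i.2 := by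
  simp only [sub_mulVec, add_mulVec, kronecker_mulVec_kronecker, hA, hB]
  funext i
  simp only [Pi.add_apply, Pi.sub_apply, Pi.smul_apply, smul_eq_mul]
  ring

end CommRing

section RCLike

variable {𝕜 m n : Type*} [RCLike 𝕜] [Fintype m] [Fintype n]

lemma kronecker_nonneg {X : Matrix m m 𝕜} {Y : Matrix n n 𝕜} (hX : 0 ≤ X) (hY : 0 ≤ Y) :
    0 ≤ X ⊗ₖ Y :=
  nonneg_iff_posSemidef.mpr <|
    (nonneg_iff_posSemidef.mp hX).kronecker (nonneg_iff_posSemidef.mp hY)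

lemma _root_.IsStarProjection.kronecker {P : Matrix m m 𝕜} {Q : Matrix n n 𝕜}
    (hP : IsStarProjection P) (hQ : IsStarProjection Q) : IsStarProjection (P ⊗ₖ Q) where
  isIdempotentElem := by
    rw [IsIdempotentElem, ← mul_kronecker_mul, hP.isIdempotentElem.eq, hQ.isIdempotentElem.eq]
  isSelfAdjoint := by
    rw [IsSelfAdjoint, star_eq_conjTranspose, conjTranspose_kronecker, ← star_eq_conjTranspose,
      ← star_eq_conjTranspose, hP.isSelfAdjoint.star_eq, hQ.isSelfAdjoint.star_eq]

end RCLike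

section Complex

variable {n : Type*} [Fintype n] [DecidableEq n]

lemma norm_le_of_mulVec_eq_smul {M : Matrix n n ℂ} {μ : ℂ} {v : n → ℂ} (hv : v ≠ 0)
    (h : M *ᵥ v = μ • v) : ‖μ‖ ≤ ‖M‖ := by
  -- for the `NormOneClass` instance used by `spectrum.norm_le_norm_of_mem`
  have : Nonempty n := by
    by_contra hn
    exact hv (funext fun i => (hn ⟨i⟩).elim)
  refine spectrum.norm_le_norm_of_mem ?_
  rw [← spectrum_toLin']
  exact (Module.End.hasEigenvalue_of_hasEigenvector
    ⟨by simpa [toLin'_apply] using h, hv⟩).mem_spectrum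

lemma exists_mulVec_eq_norm_smul {A : Matrix n n ℂ} (hA : 0 ≤ A) (hA₀ : A ≠ 0) :
    ∃ v ≠ 0, A *ᵥ v = (‖A‖ : ℂ) • v := by
  have := nontrivial_of_ne A 0 hA₀
  have hmem : (‖A‖ : ℂ) ∈ spectrum ℂ A :=
    spectrum.algebraMap_mem ℂ (CStarAlgebra.norm_mem_spectrum_of_nonneg hA)
  rw [← spectrum_toLin'] at hmem
  obtain ⟨v, hv⟩ := (Module.End.hasEigenvalue_iff_mem_spectrum.mpr hmem).exists_hasEigenvector
  exact ⟨v, hv.2, by simpa [toLin'_apply] using hv.apply_eq_smul⟩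

variable {A B : Matrix n n ℂ}

lemma kronecker_add_sub_le_algebraMap {c : ℝ} (hB : IsStarProjection B) (hAB : A ≤ B)
    (hAc : A ≤ c • B) (hc₀ : 0 ≤ c) (hc₁ : c ≤ 1) :
    A ⊗ₖ B + B ⊗ₖ A - A ⊗ₖ A ≤ algebraMap ℝ _ (2 * c - c ^ 2) := by
  rw [← sub_nonneg, Algebra.algebraMap_eq_smul_one, smul_one_sub_kronecker_add_sub]
  refine add_nonneg (add_nonneg ?_ ?_) ?_
  · exact smul_nonneg (by nlinarith) (hB.kronecker hB).one_sub_nonneg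
  · exact kronecker_nonneg (sub_nonneg.mpr hAc) (sub_nonneg.mpr hAB)
  · exact smul_nonneg (sub_nonneg.mpr hc₁) (kronecker_nonneg hB.nonneg (sub_nonneg.mpr hAc))

lemma norm_kronecker_add_sub_le (hB : IsStarProjection B) (hA : 0 ≤ A) (hAB : A ≤ B) :
    ‖A ⊗ₖ B + B ⊗ₖ A - A ⊗ₖ A‖ ≤ 2 * ‖A‖ - ‖A‖ ^ 2 := by
  have ha₁ : ‖A‖ ≤ 1 := hB.norm_le_one_of_nonneg_of_le hA hAB
  have hM : 0 ≤ A ⊗ₖ B + B ⊗ₖ A - A ⊗ₖ A := by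
    have hsub : A ⊗ₖ (B - A) = A ⊗ₖ B - A ⊗ₖ A := by
      rw [eq_sub_iff_add_eq, ← kronecker_add, sub_add_cancel]
    rw [show A ⊗ₖ B + B ⊗ₖ A - A ⊗ₖ A = B ⊗ₖ A + A ⊗ₖ (B - A) by rw [hsub]; abel]
    exact add_nonneg (kronecker_nonneg hB.nonneg hA) (kronecker_nonneg hA (sub_nonneg.mpr hAB))
  rw [CStarAlgebra.norm_le_iff_le_algebraMap _ (by nlinarith [norm_nonneg A]) hM]
  exact kronecker_add_sub_le_algebraMap hB hAB (hB.le_norm_smul_of_nonneg_of_le hA hAB)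
    (norm_nonneg A) ha₁

lemma le_norm_kronecker_add_sub (hB : IsStarProjection B) (hA : 0 ≤ A) (hAB : A ≤ B) :
    2 * ‖A‖ - ‖A‖ ^ 2 ≤ ‖A ⊗ₖ B + B ⊗ₖ A - A ⊗ₖ A‖ := by
  rcases eq_or_ne A 0 with rfl | hA₀
  · simp
  obtain ⟨v, hv, hAv⟩ := exists_mulVec_eq_norm_smul hA hA₀
  have hBv : B *ᵥ v = v := by
    have hBA : B * A = A := (hB.mul_right_and_mul_left_of_nonneg_of_le hA hAB).2
    have : (‖A‖ : ℂ) • B *ᵥ v = (‖A‖ : ℂ) • v := by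
      rw [← mulVec_smul, ← hAv, mulVec_mulVec, hBA]
    exact smul_right_injective _ (by simpa using hA₀) this
  have hw : (fun i : n × n => v i.1 * v i.2) ≠ 0 := by
    obtain ⟨i, hi⟩ := Function.ne_iff.mp hv
    exact Function.ne_iff.mpr ⟨(i, i), mul_ne_zero hi hi⟩
  have hnorm := norm_le_of_mulVec_eq_smul hw (kronecker_add_sub_mulVec_of_mulVec_eq_smul hAv hBv)
  have ha₁ : ‖A‖ ≤ 1 := hB.norm_le_one_of_nonneg_of_le hA hAB
  rwa [show (2 * (‖A‖ : ℂ) - (‖A‖ : ℂ) ^ 2) = ((2 * ‖A‖ - ‖A‖ ^ 2 : ℝ) : ℂ) by push_cast; ring,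
    Complex.norm_real, Real.norm_of_nonneg (by nlinarith [norm_nonneg A])] at hnorm

end Complex

end Matrix

/-- If `A`, `B` are Hermitian with `0 ≤ A ≤ B` and `B` an orthogonal projection,
then `‖A ⊗ₖ B + B ⊗ₖ A − A ⊗ₖ A‖ = 2‖A‖ − ‖A‖²` in spectral norm: the optimal probability of
winning at least one of two parallel repetitions in the verification model with abstention is
`1 − (1 − ‖A‖)²`, so no quantum hedging is possible. -/
theorem stmt13 {d : Type*} [Fintype d] [DecidableEq d] (A B : Matrix d d ℂ)
    (hA : A.PosSemidef) (hBH : B.IsHermitian) (hBA : (B - A).PosSemidef)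
    (hB : B * B = B) :
    specNorm (A ⊗ₖ B + B ⊗ₖ A - A ⊗ₖ A) = 2 * specNorm A - specNorm A ^ 2 := by
  have hproj : IsStarProjection B := ⟨hB, hBH⟩
  have hA₀ : 0 ≤ A := Matrix.nonneg_iff_posSemidef.mpr hA
  have hAB : A ≤ B := Matrix.le_iff.mpr hBA
  exact le_antisymm (Matrix.norm_kronecker_add_sub_le hproj hA₀ hAB)
    (Matrix.le_norm_kronecker_add_sub hproj hA₀ hAB)
end

section
/- Let Q and E be positive semidefinite complex matrices of the same finite size with Q ≤ E and E ≠ 0, and set p = sInf { t : ℝ, t ≥ 0 and Q ≤ t·E } (the optimal single-repetition winning probability in the model with abstention). Then sInf { t : ℝ, t ≥ 0 and E ⊗ₖ E − (E − Q) ⊗ₖ (E − Q) ≤ t·(E ⊗ₖ E) } = 1 − (1 − p)² = 2p − p². That is, the optimal probability of winning at least one of two parallel repetitions equals the independent-play value, so there is no quantum hedging in the model with protocol errors. -/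
open scoped ComplexOrder Kronecker

/-!
Write `Q₀ = E - Q`. On positive semidefinite matrices, `A ↦ A ⊗ A` preserves and reflects the
Loewner order: it preserves it because `A ⊗ A - B ⊗ B = (A - B) ⊗ A + B ⊗ (A - B)`, and it
reflects it because at a product vector `x ⊗ x` the quadratic form of `A ⊗ A - B ⊗ B` is
`a² - b²` with `a = x* A x ≥ 0` and `b = x* B x ≥ 0`. Since
`(1 - s²) (E ⊗ E) - (E ⊗ E - Q₀ ⊗ Q₀) = Q₀ ⊗ Q₀ - (s E) ⊗ (s E)`, the bound `1 - s²` is admissible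
for two repetitions exactly when `s E ≤ Q₀`, i.e. when `1 - s` is admissible for one. The
single-repetition infimum `p` is attained because the positive semidefinite cone is closed, so the
least admissible two-repetition bound is `1 - (1 - p)²`.
-/

namespace Matrix

section Kronecker

variable {R : Type*} {m n : Type*}

theorem star_dotProduct_kronecker_mulVec [Fintype m] [Fintype n] [CommSemiring R] [StarRing R]
    (A : Matrix m m R) (B : Matrix n n R) (x : m → R) (y : n → R) :
    star (fun i : m × n => x i.1 * y i.2) ⬝ᵥ (A ⊗ₖ B) *ᵥ (fun i : m × n => x i.1 * y i.2) =
      (star x ⬝ᵥ A *ᵥ x) * (star y ⬝ᵥ B *ᵥ y) := by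
  simp only [dotProduct, mulVec, Fintype.sum_prod_type, kroneckerMap_apply, Pi.star_apply,
    star_mul']
  rw [Finset.sum_mul_sum]
  refine Finset.sum_congr rfl fun i _ => Finset.sum_congr rfl fun j _ => ?_
  simp only [Finset.mul_sum, Finset.sum_mul]
  rw [Finset.sum_comm]
  exact Finset.sum_congr rfl fun _ _ => Finset.sum_congr rfl fun _ _ => by ring

theorem kronecker_self_sub_kronecker_self [CommRing R] (A B : Matrix n n R) :
    A ⊗ₖ A - B ⊗ₖ B = (A - B) ⊗ₖ A + B ⊗ₖ (A - B) := by
  ext ⟨i, j⟩ ⟨k, l⟩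
  simp only [sub_apply, add_apply, kroneckerMap_apply]
  ring

end Kronecker

variable {𝕜 : Type*} [RCLike 𝕜] {n : Type*} [Fintype n]

theorem isClosed_setOf_posSemidef : IsClosed {A : Matrix n n 𝕜 | A.PosSemidef} := by
  have : {A : Matrix n n 𝕜 | A.PosSemidef} =
      {A | Aᴴ = A} ∩ ⋂ x : n → 𝕜, {A | 0 ≤ star x ⬝ᵥ A *ᵥ x} := by
    ext A
    simp [posSemidef_iff_dotProduct_mulVec, IsHermitian]
  rw [this]
  exact (isClosed_eq continuous_id.matrix_conjTranspose continuous_id).inter <|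
    isClosed_iInter fun x => isClosed_le continuous_const <|
      continuous_const.dotProduct (continuous_id.matrix_mulVec continuous_const)

theorem posSemidef_kronecker_self_sub_iff {A B : Matrix n n 𝕜} (hA : A.PosSemidef)
    (hB : B.PosSemidef) : (A ⊗ₖ A - B ⊗ₖ B).PosSemidef ↔ (A - B).PosSemidef := by
  refine ⟨fun h => .of_dotProduct_mulVec_nonneg (hA.1.sub hB.1) fun x => ?_, fun h => ?_⟩
  · have hx := h.dotProduct_mulVec_nonneg fun i => x i.1 * x i.2
    rw [sub_mulVec, dotProduct_sub, star_dotProduct_kronecker_mulVec,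
      star_dotProduct_kronecker_mulVec] at hx
    rw [sub_mulVec, dotProduct_sub]
    obtain ⟨a, ha, hax⟩ := RCLike.nonneg_iff_exists_ofReal.mp (hA.dotProduct_mulVec_nonneg x)
    obtain ⟨b, hb, hbx⟩ := RCLike.nonneg_iff_exists_ofReal.mp (hB.dotProduct_mulVec_nonneg x)
    rw [← hax, ← hbx] at hx ⊢
    norm_cast at hx ⊢
    nlinarith
  · rw [kronecker_self_sub_kronecker_self]
    exact (h.kronecker hA).add (hB.kronecker h)

def dominatingScalars (A B : Matrix n n 𝕜) : Set ℝ :=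
  {t | 0 ≤ t ∧ (t • B - A).PosSemidef}

theorem sInf_dominatingScalars_mem {A B : Matrix n n 𝕜} (h : (dominatingScalars A B).Nonempty) :
    sInf (dominatingScalars A B) ∈ dominatingScalars A B :=
  have hclosed : IsClosed (dominatingScalars A B) :=
    isClosed_Ici.inter (isClosed_setOf_posSemidef.preimage (by fun_prop))
  hclosed.csInf_mem h ⟨0, fun _ ht => ht.1⟩

theorem one_sub_sq_mem_dominatingScalars_kronecker_iff {Q E : Matrix n n 𝕜} (hE : E.PosSemidef)
    (hQE : (E - Q).PosSemidef) {s : ℝ} (hs₀ : 0 ≤ s) (hs₁ : s ≤ 1) :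
    1 - s ^ 2 ∈ dominatingScalars (E ⊗ₖ E - (E - Q) ⊗ₖ (E - Q)) (E ⊗ₖ E) ↔
      1 - s ∈ dominatingScalars Q E := by
  have hkron : (1 - s ^ 2) • (E ⊗ₖ E) - (E ⊗ₖ E - (E - Q) ⊗ₖ (E - Q)) =
      (E - Q) ⊗ₖ (E - Q) - (s • E) ⊗ₖ (s • E) := by
    rw [smul_kronecker, kronecker_smul, smul_smul, ← sq]
    module
  have hsingle : (1 - s) • E - Q = (E - Q) - s • E := by module
  have hsq : 0 ≤ 1 - s ^ 2 := by nlinarith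
  simp only [dominatingScalars, Set.mem_ofPred_eq, hkron, hsingle,
    posSemidef_kronecker_self_sub_iff hQE (hE.smul hs₀), hsq, sub_nonneg.2 hs₁, true_and]

end Matrix

open Matrix

theorem stmt16_general {d : Type*} [Fintype d]
    (Q E : Matrix d d ℂ) (hE : E.PosSemidef)
    (hQE : (E - Q).PosSemidef)
    (p : ℝ) (hp : p = sInf {t : ℝ | 0 ≤ t ∧ (t • E - Q).PosSemidef}) :
    sInf {t : ℝ | 0 ≤ t ∧
        (t • (E ⊗ₖ E) - (E ⊗ₖ E - (E - Q) ⊗ₖ (E - Q))).PosSemidef}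
      = 1 - (1 - p) ^ 2 := by
  change sInf (dominatingScalars (E ⊗ₖ E - (E - Q) ⊗ₖ (E - Q)) (E ⊗ₖ E)) = _
  change p = sInf (dominatingScalars Q E) at hp
  have hbdd : BddBelow (dominatingScalars Q E) := ⟨0, fun _ ht => ht.1⟩
  have h1 : (1 : ℝ) ∈ dominatingScalars Q E := ⟨zero_le_one, by simpa using hQE⟩
  have hp₁ : p ≤ 1 := hp ▸ csInf_le hbdd h1
  have hpS : p ∈ dominatingScalars Q E := hp ▸ sInf_dominatingScalars_mem ⟨1, h1⟩
  refine IsLeast.csInf_eq ⟨?_, fun t ht => ?_⟩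
  · refine (one_sub_sq_mem_dominatingScalars_kronecker_iff hE hQE (s := 1 - p)
      (by linarith [hpS.1]) (by linarith [hpS.1])).2 ?_
    rwa [sub_sub_cancel]
  rcases le_or_gt 1 t with ht₁ | ht₁
  · nlinarith [hpS.1]
  set s := √(1 - t)
  have hts : t = 1 - s ^ 2 := by rw [Real.sq_sqrt (by linarith)]; ring
  have hs₁ : s ≤ 1 := Real.sqrt_le_one.2 (by linarith [ht.1])
  rw [hts, one_sub_sq_mem_dominatingScalars_kronecker_iff hE hQE (Real.sqrt_nonneg _) hs₁] at ht
  have hps : p ≤ 1 - s := hp ▸ csInf_le hbdd ht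
  nlinarith [Real.sqrt_nonneg (1 - t)]

/-- Let `Q ≤ E` be positive semidefinite with `E ≠ 0`, and let
`p = inf {t ≥ 0 : Q ≤ t·E}` be the optimal single-repetition winning probability in the
model with abstention. Then the optimal probability of winning at least one of two parallel
repetitions, `inf {t ≥ 0 : E ⊗ E − (E − Q) ⊗ (E − Q) ≤ t·(E ⊗ E)}`, equals
`1 − (1 − p)² = 2p − p²`: no quantum hedging is possible in the model with protocol errors. -/
theorem stmt16 {d : Type*} [Fintype d] [DecidableEq d] [Nonempty d]
    (Q E : Matrix d d ℂ) (hQ : Q.PosSemidef) (hE : E.PosSemidef)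
    (hQE : (E - Q).PosSemidef) (hEne : E ≠ 0)
    (p : ℝ) (hp : p = sInf {t : ℝ | 0 ≤ t ∧ (t • E - Q).PosSemidef}) :
    sInf {t : ℝ | 0 ≤ t ∧
        (t • (E ⊗ₖ E) - (E ⊗ₖ E - (E - Q) ⊗ₖ (E - Q))).PosSemidef}
      = 1 - (1 - p) ^ 2 :=
  stmt16_general Q E hE hQE p hp
end
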